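/- arXiv:2604.14662 — 2 statements merged into one kernel-verified Lean document; each statement's English description precedes it below -/
import Mathlib

section
/- Let n ≥ 3, K ≥ 1, and let (f, g) be a K-cinematic pair of maps ℝ^{n−2} → ℝ^{n−1} on [0,1]^{n−2}. Set d := ‖f − g‖_{C²([0,1]^{n−2})} and let δ be a real number with 0 < δ ≤ d. Then L^{2n−3}( f^δ([0,1]^{n−2}) ∩ g^δ([0,1]^{n−2}) ) ≤ C(n,K) · δ^{2n−3} / d^{n−2}, where C(n,K) is a constant depending only on n and K. -/
/-!
Where the two vertical `δ`-neighbourhoods meet, `|f - g| < 2δ`, so by Fubini the intersection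
has measure at most `|E| · |B_δ|` for the sublevel set `E = {|f - g| < 2δ}` of the cube.
Let `d = ‖f - g‖_{C²}`. For `x, y ∈ E` at distance `ρ ≤ 1/(2K)`, transversality gives
`|D(f - g)(x - y)| ≥ (d/K - 2δ) ρ`, while the second-order Taylor remainder is at most
`d ρ² ≤ d ρ/(2K)`; hence `ρ = O(Kδ/d)`. A covering of the cube by a fixed finite number of balls of
radius `1/(4K)` then gives `|E| ≲ (Kδ/d)^{n-2}`.
-/

open MeasureTheory Set
open scoped ENNReal NNReal

def unitCube (m : ℕ) : Set (EuclideanSpace ℝ (Fin m)) :=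
  {x | ∀ i, x i ∈ Set.Icc (0:ℝ) 1}

noncomputable def C2NormOn {m l : ℕ}
    (h : EuclideanSpace ℝ (Fin m) → EuclideanSpace ℝ (Fin l))
    (D : Set (EuclideanSpace ℝ (Fin m))) : ℝ :=
  ⨆ x ∈ D, max ‖h x‖ (max ‖fderiv ℝ h x‖ ‖fderiv ℝ (fderiv ℝ h) x‖)

def CinematicPair {m l : ℕ} (K : ℝ)
    (f g : EuclideanSpace ℝ (Fin m) → EuclideanSpace ℝ (Fin l)) : Prop :=
  ContDiff ℝ 2 f ∧ ContDiff ℝ 2 g ∧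
  C2NormOn f (unitCube m) ≤ K ∧ C2NormOn g (unitCube m) ≤ K ∧
  ∀ x ∈ unitCube m, ∀ ξ : EuclideanSpace ℝ (Fin m), ‖ξ‖ = 1 →
    K⁻¹ * C2NormOn (f - g) (unitCube m) ≤ ‖f x - g x‖ + ‖fderiv ℝ f x ξ - fderiv ℝ g x ξ‖

def vertNbhd {m l : ℕ} (f : EuclideanSpace ℝ (Fin m) → EuclideanSpace ℝ (Fin l))
    (D : Set (EuclideanSpace ℝ (Fin m))) (η : ℝ) :
    Set (EuclideanSpace ℝ (Fin m) × EuclideanSpace ℝ (Fin l)) :=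
  {p | p.1 ∈ D ∧ ‖p.2 - f p.1‖ < η}

lemma convex_unitCube (m : ℕ) : Convex ℝ (unitCube m) := fun _ hx _ hy _ _ ha hb hab i =>
  convex_Icc (0 : ℝ) 1 (hx i) (hy i) ha hb hab

lemma isCompact_unitCube (m : ℕ) : IsCompact (unitCube m) := by
  have : unitCube m = EuclideanSpace.equiv (Fin m) ℝ ⁻¹' univ.pi fun _ => Icc 0 1 := by
    ext x
    simp only [unitCube, mem_ofPred_eq, mem_preimage, mem_univ_pi]
    rfl
  rw [this]
  exact (EuclideanSpace.equiv (Fin m) ℝ).toHomeomorph.isCompact_preimage.2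
    (isCompact_univ_pi fun _ => isCompact_Icc)

lemma zero_mem_unitCube (m : ℕ) : 0 ∈ unitCube m := fun _ => by simp

lemma le_C2NormOn {m l : ℕ} {h : EuclideanSpace ℝ (Fin m) → EuclideanSpace ℝ (Fin l)}
    {D : Set (EuclideanSpace ℝ (Fin m))} (hh : ContDiff ℝ 2 h) (hD : IsCompact D)
    {x : EuclideanSpace ℝ (Fin m)} (hx : x ∈ D) :
    max ‖h x‖ (max ‖fderiv ℝ h x‖ ‖fderiv ℝ (fderiv ℝ h) x‖) ≤ C2NormOn h D := by
  have hh1 : ContDiff ℝ 1 (fderiv ℝ h) := hh.fderiv_right (by norm_num)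
  have hcont : Continuous fun y =>
      max ‖h y‖ (max ‖fderiv ℝ h y‖ ‖fderiv ℝ (fderiv ℝ h) y‖) :=
    hh.continuous.norm.max (hh1.continuous.norm.max (hh1.continuous_fderiv one_ne_zero).norm)
  unfold C2NormOn
  apply le_ciSup₂ ((hD.bddAbove_image hcont.continuousOn).mono ?_) x hx
  simp only [iUnion_subset_iff, range_subset_iff]
  exact fun y hy => mem_image_of_mem _ hy

section Transversality

variable {V W : Type*} [NormedAddCommGroup V] [NormedSpace ℝ V]
  [NormedAddCommGroup W] [NormedSpace ℝ W]

lemma norm_sub_sub_fderiv_le {h : V → W} {D : Set V} {c : ℝ} (hD : Convex ℝ D)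
    (hh : ∀ z ∈ D, DifferentiableAt ℝ h z) (hh' : ∀ z ∈ D, DifferentiableAt ℝ (fderiv ℝ h) z)
    (hc : ∀ z ∈ D, ‖fderiv ℝ (fderiv ℝ h) z‖ ≤ c) {x y : V} (hx : x ∈ D) (hy : y ∈ D) :
    ‖h x - h y - fderiv ℝ h y (x - y)‖ ≤ c * ‖x - y‖ ^ 2 := by
  set s := D ∩ Metric.closedBall y ‖x - y‖
  have hc0 : 0 ≤ c := le_trans (by positivity) (hc y hy)
  have hbound : ∀ z ∈ s, ‖fderiv ℝ h z - fderiv ℝ h y‖ ≤ c * ‖x - y‖ := fun z hz =>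
    calc ‖fderiv ℝ h z - fderiv ℝ h y‖ ≤ c * ‖z - y‖ :=
          hD.norm_image_sub_le_of_norm_fderiv_le hh' hc hy hz.1
      _ ≤ c * ‖x - y‖ := by
          gcongr
          simpa [dist_eq_norm] using hz.2
  have hxs : x ∈ s := ⟨hx, by simp [dist_eq_norm]⟩
  have hys : y ∈ s := ⟨hy, Metric.mem_closedBall_self (norm_nonneg _)⟩
  calc ‖h x - h y - fderiv ℝ h y (x - y)‖ ≤ c * ‖x - y‖ * ‖x - y‖ :=
        (hD.inter (convex_closedBall _ _)).norm_image_sub_le_of_norm_fderiv_le'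
          (fun z hz => hh z hz.1) hbound hys hxs
    _ = c * ‖x - y‖ ^ 2 := by ring

lemma ContinuousLinearMap.mul_norm_le_norm_apply {A : V →L[ℝ] W} {a : ℝ}
    (hA : ∀ ξ : V, ‖ξ‖ = 1 → a ≤ ‖A ξ‖) (v : V) : a * ‖v‖ ≤ ‖A v‖ := by
  rcases eq_or_ne v 0 with rfl | hv
  · simp
  have hv' : 0 < ‖v‖ := norm_pos_iff.2 hv
  have := hA (‖v‖⁻¹ • v) (norm_smul_inv_norm hv)
  rw [map_smul, norm_smul, norm_inv, norm_norm, ← div_eq_inv_mul, le_div_iff₀ hv'] at this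
  exact this

lemma mul_norm_sub_le_of_transversal {h : V → W} {D : Set V} {d K δ : ℝ} (hD : Convex ℝ D)
    (hh : ∀ z ∈ D, DifferentiableAt ℝ h z) (hh' : ∀ z ∈ D, DifferentiableAt ℝ (fderiv ℝ h) z)
    (hd : ∀ z ∈ D, ‖fderiv ℝ (fderiv ℝ h) z‖ ≤ d) (hK : 0 < K) {x y : V} (hx : x ∈ D)
    (hy : y ∈ D) (htr : ∀ ξ : V, ‖ξ‖ = 1 → K⁻¹ * d ≤ ‖h y‖ + ‖fderiv ℝ h y ξ‖)
    (hhx : ‖h x‖ < 2 * δ) (hhy : ‖h y‖ < 2 * δ) (hxy : ‖x - y‖ ≤ (2 * K)⁻¹) :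
    d * ‖x - y‖ ≤ (8 * K + 2) * δ := by
  have hd0 : 0 ≤ d := le_trans (by positivity) (hd y hy)
  have hlower : (K⁻¹ * d - 2 * δ) * ‖x - y‖ ≤ ‖fderiv ℝ h y (x - y)‖ :=
    ContinuousLinearMap.mul_norm_le_norm_apply
      (fun ξ hξ => by linarith [htr ξ hξ]) (x - y)
  have hupper : ‖fderiv ℝ h y (x - y)‖ ≤ 4 * δ + d * ‖x - y‖ ^ 2 :=
    calc ‖fderiv ℝ h y (x - y)‖
        ≤ ‖h x - h y‖ + ‖h x - h y - fderiv ℝ h y (x - y)‖ := norm_le_insert _ _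
      _ ≤ (‖h x‖ + ‖h y‖) + d * ‖x - y‖ ^ 2 :=
          add_le_add (norm_sub_le _ _) (norm_sub_sub_fderiv_le hD hh hh' hd hx hy)
      _ ≤ 4 * δ + d * ‖x - y‖ ^ 2 := by linarith
  have hδ : 0 < δ := by linarith [norm_nonneg (h y)]
  have hKxy : 2 * K * ‖x - y‖ ≤ 1 := by
    calc 2 * K * ‖x - y‖ ≤ 2 * K * (2 * K)⁻¹ := by gcongr
      _ = 1 := mul_inv_cancel₀ (by positivity)
  have hmain : 2 * d * ‖x - y‖ - 2 * δ * (2 * K * ‖x - y‖)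
      ≤ 8 * K * δ + d * ‖x - y‖ * (2 * K * ‖x - y‖) :=
    calc _ = 2 * K * ((K⁻¹ * d - 2 * δ) * ‖x - y‖) := by field_simp
      _ ≤ 2 * K * (4 * δ + d * ‖x - y‖ ^ 2) := by gcongr; exact hlower.trans hupper
      _ = _ := by ring
  linarith [mul_le_mul_of_nonneg_left hKxy (mul_nonneg hd0 (norm_nonneg (x - y))),
    mul_le_mul_of_nonneg_left hKxy hδ.le]

end Transversality

section VerticalNeighbourhood

variable {m l : ℕ}

lemma vertNbhd_inter_subset (f g : EuclideanSpace ℝ (Fin m) → EuclideanSpace ℝ (Fin l))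
    (D : Set (EuclideanSpace ℝ (Fin m))) (δ : ℝ) :
    vertNbhd f D δ ∩ vertNbhd g D δ ⊆ vertNbhd f {x ∈ D | ‖f x - g x‖ < 2 * δ} δ := by
  rintro ⟨x, y⟩ ⟨⟨hx, hfy⟩, -, hgy⟩
  refine ⟨⟨hx, ?_⟩, hfy⟩
  calc ‖f x - g x‖ ≤ ‖f x - y‖ + ‖y - g x‖ := norm_sub_le_norm_sub_add_norm_sub _ _ _
    _ = ‖y - f x‖ + ‖y - g x‖ := by rw [norm_sub_rev]
    _ < 2 * δ := by linarith

lemma volume_vertNbhd {f : EuclideanSpace ℝ (Fin m) → EuclideanSpace ℝ (Fin l)}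
    (hf : Measurable f) {D : Set (EuclideanSpace ℝ (Fin m))} (hD : MeasurableSet D) (δ : ℝ) :
    volume (vertNbhd f D δ) = volume D * volume (Metric.ball (0 : EuclideanSpace ℝ (Fin l)) δ) := by
  have hmeas : MeasurableSet (vertNbhd f D δ) :=
    (measurable_fst hD).inter
      (measurableSet_lt ((measurable_snd.sub (hf.comp measurable_fst)).norm) measurable_const)
  have hfiber : ∀ x, volume (Prod.mk x ⁻¹' vertNbhd f D δ)
      = D.indicator (fun _ => volume (Metric.ball (0 : EuclideanSpace ℝ (Fin l)) δ)) x := by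
    intro x
    by_cases hx : x ∈ D
    · have : Prod.mk x ⁻¹' vertNbhd f D δ = Metric.ball (f x) δ := by
        ext y
        simp [vertNbhd, hx, dist_eq_norm]
      rw [this, Measure.addHaar_ball_center, indicator_of_mem hx]
    · have : Prod.mk x ⁻¹' vertNbhd f D δ = ∅ := by
        ext y
        simp [vertNbhd, hx]
      rw [this, measure_empty, indicator_of_notMem hx]
  rw [Measure.volume_eq_prod, Measure.prod_apply hmeas]
  simp_rw [hfiber]
  rw [lintegral_indicator hD, setLIntegral_const, mul_comm]

lemma volume_closedBall_eq_ofReal (x : EuclideanSpace ℝ (Fin m)) {r : ℝ} (hr : 0 ≤ r) :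
    volume (Metric.closedBall x r) =
      ENNReal.ofReal
        (r ^ m * (volume (Metric.closedBall (0 : EuclideanSpace ℝ (Fin m)) 1)).toReal) := by
  rw [Measure.addHaar_closedBall' _ _ hr, finrank_euclideanSpace_fin,
    ENNReal.ofReal_mul (by positivity), ENNReal.ofReal_toReal measure_closedBall_lt_top.ne]

lemma volume_ball_eq_ofReal (x : EuclideanSpace ℝ (Fin m)) {r : ℝ} (hr : 0 < r) :
    volume (Metric.ball x r) =
      ENNReal.ofReal (r ^ m * (volume (Metric.ball (0 : EuclideanSpace ℝ (Fin m)) 1)).toReal) := by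
  rw [Measure.addHaar_ball_of_pos _ _ hr, finrank_euclideanSpace_fin,
    ENNReal.ofReal_mul (by positivity), ENNReal.ofReal_toReal measure_ball_lt_top.ne]

end VerticalNeighbourhood

lemma measure_le_card_mul_of_dist_le {E : Type*} [NormedAddCommGroup E] [NormedSpace ℝ E]
    [MeasurableSpace E] [BorelSpace E] [FiniteDimensional ℝ E] (μ : Measure E)
    [μ.IsAddHaarMeasure] {S : Set E} {t : Finset E} {ρ r : ℝ}
    (hcover : S ⊆ ⋃ c ∈ t, Metric.ball c ρ)
    (hS : ∀ x ∈ S, ∀ y ∈ S, dist x y < 2 * ρ → dist x y ≤ r) :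
    μ S ≤ t.card * μ (Metric.closedBall 0 r) := by
  have hpiece : ∀ c ∈ t, μ (S ∩ Metric.ball c ρ) ≤ μ (Metric.closedBall 0 r) := by
    intro c _
    rcases (S ∩ Metric.ball c ρ).eq_empty_or_nonempty with he | ⟨y, hyS, hyc⟩
    · simp [he]
    rw [← Measure.addHaar_closedBall_center μ y]
    refine measure_mono fun x ⟨hxS, hxc⟩ => hS x hxS y hyS ?_
    linarith [dist_triangle_right x y c, Metric.mem_ball.1 hxc, Metric.mem_ball.1 hyc]
  calc μ S ≤ μ (⋃ c ∈ t, S ∩ Metric.ball c ρ) := by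
        refine measure_mono fun x hx => ?_
        obtain ⟨c, hc, hxc⟩ := mem_iUnion₂.1 (hcover hx)
        exact mem_iUnion₂.2 ⟨c, hc, hx, hxc⟩
    _ ≤ ∑ c ∈ t, μ (S ∩ Metric.ball c ρ) := measure_biUnion_finset_le _ _
    _ ≤ ∑ _c ∈ t, μ (Metric.closedBall 0 r) := Finset.sum_le_sum hpiece
    _ = t.card * μ (Metric.closedBall 0 r) := by rw [Finset.sum_const, nsmul_eq_mul]

namespace CinematicPair

variable {m l : ℕ} {K : ℝ} {f g : EuclideanSpace ℝ (Fin m) → EuclideanSpace ℝ (Fin l)}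

lemma transversal (hfg : CinematicPair K f g) {x : EuclideanSpace ℝ (Fin m)}
    (hx : x ∈ unitCube m) {ξ : EuclideanSpace ℝ (Fin m)} (hξ : ‖ξ‖ = 1) :
    K⁻¹ * C2NormOn (f - g) (unitCube m) ≤ ‖(f - g) x‖ + ‖fderiv ℝ (f - g) x ξ‖ := by
  obtain ⟨hf, hg, -, -, htr⟩ := hfg
  rw [fderiv_sub (hf.differentiable two_ne_zero x) (hg.differentiable two_ne_zero x)]
  exact htr x hx ξ hξ

lemma mul_norm_sub_le (hfg : CinematicPair K f g) (hK : 0 < K) {δ : ℝ}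
    {x y : EuclideanSpace ℝ (Fin m)} (hx : x ∈ {z ∈ unitCube m | ‖f z - g z‖ < 2 * δ})
    (hy : y ∈ {z ∈ unitCube m | ‖f z - g z‖ < 2 * δ}) (hxy : ‖x - y‖ ≤ (2 * K)⁻¹) :
    C2NormOn (f - g) (unitCube m) * ‖x - y‖ ≤ (8 * K + 2) * δ := by
  have hh : ContDiff ℝ 2 (f - g) := hfg.1.sub hfg.2.1
  have hh1 : ContDiff ℝ 1 (fderiv ℝ (f - g)) := hh.fderiv_right (by norm_num)
  have hd : ∀ z ∈ unitCube m,
      ‖fderiv ℝ (fderiv ℝ (f - g)) z‖ ≤ C2NormOn (f - g) (unitCube m) := fun z hz =>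
    (le_max_right _ _).trans ((le_max_right _ _).trans (le_C2NormOn hh (isCompact_unitCube m) hz))
  exact mul_norm_sub_le_of_transversal (convex_unitCube m)
    (fun z _ => (hh.differentiable two_ne_zero).differentiableAt)
    (fun z _ => (hh1.differentiable one_ne_zero).differentiableAt)
    hd hK hx.1 hy.1 (fun ξ hξ => hfg.transversal hy.1 hξ) hx.2 hy.2 hxy

lemma volume_sublevel_le (hfg : CinematicPair K f g) (hK : 0 < K)
    {t : Finset (EuclideanSpace ℝ (Fin m))} (ht : unitCube m ⊆ ⋃ c ∈ t, Metric.ball c (4 * K)⁻¹)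
    {δ : ℝ} (hd : 0 < C2NormOn (f - g) (unitCube m)) :
    volume {x ∈ unitCube m | ‖f x - g x‖ < 2 * δ} ≤
      t.card * volume (Metric.closedBall (0 : EuclideanSpace ℝ (Fin m))
        ((8 * K + 2) * δ / C2NormOn (f - g) (unitCube m))) := by
  refine measure_le_card_mul_of_dist_le _ ((sep_subset _ _).trans ht) fun x hx y hy hxy => ?_
  rw [dist_eq_norm, le_div_iff₀ hd, mul_comm]
  refine hfg.mul_norm_sub_le hK hx hy ?_
  rw [← dist_eq_norm, show (2 * K)⁻¹ = 2 * (4 * K)⁻¹ by ring]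
  exact hxy.le

lemma volume_vertNbhd_inter_le (hfg : CinematicPair K f g) (hK : 0 < K)
    {t : Finset (EuclideanSpace ℝ (Fin m))} (ht : unitCube m ⊆ ⋃ c ∈ t, Metric.ball c (4 * K)⁻¹)
    {δ : ℝ} (hd : 0 < C2NormOn (f - g) (unitCube m)) :
    volume (vertNbhd f (unitCube m) δ ∩ vertNbhd g (unitCube m) δ) ≤
      t.card * volume (Metric.closedBall (0 : EuclideanSpace ℝ (Fin m))
        ((8 * K + 2) * δ / C2NormOn (f - g) (unitCube m))) *
        volume (Metric.ball (0 : EuclideanSpace ℝ (Fin l)) δ) := by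
  have hmeas : MeasurableSet {x ∈ unitCube m | ‖f x - g x‖ < 2 * δ} :=
    (isCompact_unitCube m).isClosed.measurableSet.inter
      (measurableSet_lt (hfg.1.continuous.sub hfg.2.1.continuous).norm.measurable measurable_const)
  calc volume (vertNbhd f (unitCube m) δ ∩ vertNbhd g (unitCube m) δ)
      ≤ volume (vertNbhd f {x ∈ unitCube m | ‖f x - g x‖ < 2 * δ} δ) :=
        measure_mono (vertNbhd_inter_subset f g _ δ)
    _ = volume {x ∈ unitCube m | ‖f x - g x‖ < 2 * δ} *
          volume (Metric.ball (0 : EuclideanSpace ℝ (Fin l)) δ) :=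
        volume_vertNbhd hfg.1.continuous.measurable hmeas δ
    _ ≤ _ := by gcongr; exact hfg.volume_sublevel_le hK ht hd

end CinematicPair

theorem stmt6_general (n : ℕ) (K : ℝ) (hK : 1 ≤ K) :
    ∃ C : ℝ, 0 < C ∧
      ∀ f g : EuclideanSpace ℝ (Fin (n-2)) → EuclideanSpace ℝ (Fin (n-1)),
        CinematicPair K f g →
        ∀ δ : ℝ, 0 < δ → δ ≤ C2NormOn (f - g) (unitCube (n-2)) →
          volume (vertNbhd f (unitCube (n-2)) δ ∩ vertNbhd g (unitCube (n-2)) δ)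
            ≤ ENNReal.ofReal
                (C * δ ^ (2*n-3) / C2NormOn (f - g) (unitCube (n-2)) ^ (n-2)) := by
  have hK0 : 0 < K := one_pos.trans_le hK
  obtain ⟨t, -, ht, hcover⟩ :=
    (isCompact_unitCube (n-2)).finite_cover_balls (e := (4 * K)⁻¹) (by positivity)
  lift t to Finset (EuclideanSpace ℝ (Fin (n-2))) using ht
  have htne : 0 < t.card := by
    obtain ⟨c, hc, -⟩ := mem_iUnion₂.1 (hcover (zero_mem_unitCube _))
    exact Finset.card_pos.2 ⟨c, hc⟩
  have hbm : 0 < (volume (Metric.closedBall (0 : EuclideanSpace ℝ (Fin (n-2))) 1)).toReal :=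
    ENNReal.toReal_pos (Metric.measure_closedBall_pos _ _ one_pos).ne' measure_closedBall_lt_top.ne
  have hbl : 0 < (volume (Metric.ball (0 : EuclideanSpace ℝ (Fin (n-1))) 1)).toReal :=
    ENNReal.toReal_pos (Metric.measure_ball_pos _ _ one_pos).ne' measure_ball_lt_top.ne
  refine ⟨t.card * (8 * K + 2) ^ (n-2) *
      (volume (Metric.closedBall (0 : EuclideanSpace ℝ (Fin (n-2))) 1)).toReal *
      (volume (Metric.ball (0 : EuclideanSpace ℝ (Fin (n-1))) 1)).toReal,
    by positivity, fun f g hfg δ hδ hδd => ?_⟩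
  have hd := hδ.trans_le hδd
  refine (hfg.volume_vertNbhd_inter_le hK0 hcover hd).trans_eq ?_
  rw [volume_closedBall_eq_ofReal _ (by positivity), volume_ball_eq_ofReal _ hδ,
    ← ENNReal.ofReal_natCast, ← ENNReal.ofReal_mul (by positivity),
    ← ENNReal.ofReal_mul (by positivity)]
  congr 1
  rw [show 2 * n - 3 = (n - 2) + (n - 1) by omega, pow_add, div_pow, mul_pow]
  field_simp

/-- For a `K`-cinematic pair `(f,g)` on `[0,1]^{n−2}` with
`d = ‖f−g‖_{C²}` and `0 < δ ≤ d`, the vertical `δ`-neighbourhoods of the graphs satisfy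
`L^{2n−3}(f^δ([0,1]^{n−2}) ∩ g^δ([0,1]^{n−2})) ≤ C(n,K) δ^{2n−3} / d^{n−2}`. -/
theorem stmt6 (n : ℕ) (hn : 3 ≤ n) (K : ℝ) (hK : 1 ≤ K) :
    ∃ C : ℝ, 0 < C ∧
      ∀ f g : EuclideanSpace ℝ (Fin (n-2)) → EuclideanSpace ℝ (Fin (n-1)),
        CinematicPair K f g →
        ∀ δ : ℝ, 0 < δ → δ ≤ C2NormOn (f - g) (unitCube (n-2)) →
          volume (vertNbhd f (unitCube (n-2)) δ ∩ vertNbhd g (unitCube (n-2)) δ)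
            ≤ ENNReal.ofReal
                (C * δ ^ (2*n-3) / C2NormOn (f - g) (unitCube (n-2)) ^ (n-2)) :=
  stmt6_general n K hK
end

section
/- Let K ⊂ S² = {p ∈ ℝ³ : |p| = 1} be a set satisfying: (i) ⟨p, q⟩ > cos(π/100) for all p, q ∈ K; and (ii) K is strictly geodesically convex, i.e. for all distinct p, q ∈ K, writing α := arccos⟨p, q⟩ ∈ (0, π), the point (sin((1−t)α) p + sin(tα) q)/sin(α) does not belong to K for any t ∈ (0,1). Let C := {r p : r ∈ [0,1], p ∈ K} be the cone over K with apex at the origin, and let L ⊂ ℝ³ be a line with 0 ∉ L. Then L ∩ C contains at most 2 points. -/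
/-!
Since `0 ∉ L`, every point of `L ∩ C` is `r • p` with `r > 0` and `p ∈ K`. Three points of
`L ∩ C` would be collinear, so one of them, `r₂ • p₂`, lies strictly between the others; then
`p₂ = a • p₁ + b • p₃` with `a, b > 0`, and `p₁ ≠ p₃` because the line through `r₁ • p₁` and
`r₃ • p₃` misses the origin. A unit vector that is a positive combination of two distinct,
non-antipodal unit vectors lies on the open minimising arc between them, so `p₂ ∈ K`
contradicts the convexity hypothesis.
-/

open Set AffineMap Real
open scoped RealInnerProductSpace

section Collinear

variable {R V P : Type*} [Field R] [LinearOrder R] [IsStrictOrderedRing R]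
  [AddCommGroup V] [Module R V] [AddTorsor V P]

theorem Collinear.exists_subset_pair_of_forall_not_sbtw {s : Set P} (hs : Collinear R s)
    (h : ∀ x ∈ s, ∀ y ∈ s, ∀ z ∈ s, ¬Sbtw R x y z) : ∃ a b, s ⊆ {a, b} := by
  by_contra! hne
  simp only [subset_pair_iff, not_forall, not_or, exists_prop] at hne
  obtain ⟨x, hx, -⟩ := hne (Classical.arbitrary P) (Classical.arbitrary P)
  obtain ⟨y, hy, hyx, -⟩ := hne x x
  obtain ⟨z, hz, hzx, hzy⟩ := hne x y
  have hxyz : Collinear R {x, y, z} := hs.subset (by simp [insert_subset_iff, hx, hy, hz])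
  rcases hxyz.wbtw_or_wbtw_or_wbtw with hb | hb | hb
  · exact h x hx y hy z hz ⟨hb, hyx, fun e => hzy e.symm⟩
  · exact h y hy z hz x hx ⟨hb, hzy, hzx⟩
  · exact h z hz x hx y hy ⟨hb, fun e => hzx e.symm, fun e => hyx e.symm⟩

end Collinear

section Line

variable {E : Type*} [AddCommGroup E] [Module ℝ E]

theorem collinear_setOf_eq_add_smul (x v : E) : Collinear ℝ {y | ∃ t : ℝ, y = x + t • v} :=
  (collinear_iff_exists_forall_eq_smul_vadd _).2
    ⟨x, v, fun _ ⟨t, ht⟩ => ⟨t, ht.trans (add_comm _ _)⟩⟩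

theorem affineSpan_pair_subset_setOf_eq_add_smul {x v u w : E}
    (hu : u ∈ {y | ∃ t : ℝ, y = x + t • v}) (hw : w ∈ {y | ∃ t : ℝ, y = x + t • v}) :
    (line[ℝ, u, w] : Set E) ⊆ {y | ∃ t : ℝ, y = x + t • v} := by
  obtain ⟨s, rfl⟩ := hu
  obtain ⟨s', rfl⟩ := hw
  intro y hy
  obtain ⟨r, rfl⟩ := mem_affineSpan_pair_iff_exists_lineMap_eq.1 hy
  exact ⟨(1 - r) * s + r * s', by rw [lineMap_apply_module]; module⟩

theorem exists_pos_smul_add_smul_of_sbtw {p₁ p₂ p₃ : E} {r₁ r₂ r₃ : ℝ} (hr₁ : 0 < r₁)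
    (hr₂ : 0 < r₂) (hr₃ : 0 < r₃) (h : Sbtw ℝ (r₁ • p₁) (r₂ • p₂) (r₃ • p₃)) :
    ∃ a b : ℝ, 0 < a ∧ 0 < b ∧ p₂ = a • p₁ + b • p₃ := by
  obtain ⟨t, ⟨ht₀, ht₁⟩, ht⟩ := h.mem_image_Ioo
  refine ⟨r₂⁻¹ * ((1 - t) * r₁), r₂⁻¹ * (t * r₃), by positivity,
    mul_pos (inv_pos.2 hr₂) (mul_pos ht₀ hr₃), ?_⟩
  rw [lineMap_apply_module] at ht
  calc p₂ = r₂⁻¹ • r₂ • p₂ := by rw [smul_smul, inv_mul_cancel₀ hr₂.ne', one_smul]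
    _ = _ := by rw [← ht]; module

end Line

theorem exists_mem_Ioo_sin_sub_eq_and_sin_eq {a b c : ℝ} (ha : 0 < a) (hb : 0 < b)
    (hc₁ : -1 < c) (hc₂ : c < 1) (habc : a ^ 2 + 2 * a * b * c + b ^ 2 = 1) :
    ∃ θ ∈ Ioo 0 (arccos c),
      sin (arccos c - θ) = a * sin (arccos c) ∧ sin θ = b * sin (arccos c) := by
  set α := arccos c
  have hsin_pos : 0 < sin α :=
    sin_pos_of_pos_of_lt_pi (arccos_pos.2 hc₂) (arccos_lt_pi.2 hc₁)
  have hsq : 1 - (a + b * c) ^ 2 = (b * sin α) ^ 2 := by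
    rw [mul_pow, sin_arccos, sq_sqrt (by nlinarith)]
    linear_combination -habc
  have hlt : (a + b * c) ^ 2 < 1 := by nlinarith [mul_pos hb hsin_pos]
  -- `θ` is the angle between `p` and `a • p + b • q` when `c = ⟪p, q⟫`.
  set θ := arccos (a + b * c)
  have hsinθ : sin θ = b * sin α := by
    rw [sin_arccos, hsq, sqrt_sq (by positivity)]
  have hsin_sub : sin (α - θ) = a * sin α := by
    rw [sin_sub, hsinθ, cos_arccos (by nlinarith) (by nlinarith), cos_arccos hc₁.le hc₂.le]
    ring
  refine ⟨θ, ⟨arccos_pos.2 (by nlinarith), ?_⟩, hsin_sub, hsinθ⟩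
  by_contra! hαθ
  have hsin_nonneg : 0 ≤ sin (θ - α) :=
    sin_nonneg_of_nonneg_of_le_pi (by linarith)
      (by linarith [arccos_le_pi (a + b * c), arccos_nonneg c])
  rw [← neg_sub, sin_neg, hsin_sub] at hsin_nonneg
  nlinarith [mul_pos ha hsin_pos]

section Slerp

variable {E : Type*} [NormedAddCommGroup E] [InnerProductSpace ℝ E]

noncomputable def slerp (p q : E) (t : ℝ) : E :=
  (sin (arccos ⟪p, q⟫))⁻¹ • (sin ((1 - t) * arccos ⟪p, q⟫) • p + sin (t * arccos ⟪p, q⟫) • q)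

theorem exists_mem_Ioo_slerp_eq {p q : E} (hp : ‖p‖ = 1) (hq : ‖q‖ = 1) (h₁ : -1 < ⟪p, q⟫)
    (h₂ : ⟪p, q⟫ < 1) {a b : ℝ} (ha : 0 < a) (hb : 0 < b) (hab : ‖a • p + b • q‖ = 1) :
    ∃ t ∈ Ioo (0 : ℝ) 1, slerp p q t = a • p + b • q := by
  have habc : a ^ 2 + 2 * a * b * ⟪p, q⟫ + b ^ 2 = 1 := by
    have h := norm_add_sq_real (a • p) (b • q)
    rw [hab, norm_smul, norm_smul, hp, hq, real_inner_smul_left, real_inner_smul_right,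
      norm_of_nonneg ha.le, norm_of_nonneg hb.le] at h
    linear_combination -h
  obtain ⟨θ, ⟨hθ₀, hθα⟩, hsin_sub, hsin⟩ := exists_mem_Ioo_sin_sub_eq_and_sin_eq ha hb h₁ h₂ habc
  have hα : 0 < arccos ⟪p, q⟫ := arccos_pos.2 h₂
  have hsin_ne : sin (arccos ⟪p, q⟫) ≠ 0 :=
    (sin_pos_of_pos_of_lt_pi hα (arccos_lt_pi.2 h₁)).ne'
  refine ⟨θ / arccos ⟪p, q⟫, ⟨div_pos hθ₀ hα, (div_lt_one hα).2 hθα⟩, ?_⟩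
  rw [slerp, sub_mul, one_mul, div_mul_cancel₀ _ hα.ne', hsin_sub, hsin, mul_comm a, mul_comm b,
    mul_smul, mul_smul, ← smul_add, smul_smul, inv_mul_cancel₀ hsin_ne, one_smul]

theorem not_sbtw_smul_of_forall_slerp_notMem {K : Set E} (hKs : ∀ p ∈ K, ‖p‖ = 1)
    (hK : ∀ p ∈ K, ∀ q ∈ K, -1 < ⟪p, q⟫)
    (hKconv : ∀ p ∈ K, ∀ q ∈ K, p ≠ q → ∀ t ∈ Ioo (0 : ℝ) 1, slerp p q t ∉ K)
    {p₁ p₂ p₃ : E} (hp₁ : p₁ ∈ K) (hp₂ : p₂ ∈ K) (hp₃ : p₃ ∈ K) {r₁ r₂ r₃ : ℝ}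
    (hr₁ : 0 ≤ r₁) (hr₂ : 0 ≤ r₂) (hr₃ : 0 ≤ r₃) (h0 : (0 : E) ∉ line[ℝ, r₁ • p₁, r₃ • p₃]) :
    ¬Sbtw ℝ (r₁ • p₁) (r₂ • p₂) (r₃ • p₃) := by
  intro h
  have hpos : ∀ {r : ℝ} {p : E}, 0 ≤ r → r • p ∈ line[ℝ, r₁ • p₁, r₃ • p₃] → 0 < r :=
    fun hr hmem => hr.lt_of_ne (by rintro rfl; exact h0 (by simpa using hmem))
  have hp₁₃ : p₁ ≠ p₃ := by
    rintro rfl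
    have hr : r₁ - r₃ ≠ 0 := sub_ne_zero.2 fun e => h.left_ne_right (by rw [e])
    refine h0 (mem_affineSpan_pair_iff_exists_lineMap_eq.2 ⟨r₁ / (r₁ - r₃), ?_⟩)
    rw [lineMap_apply_module, smul_smul, smul_smul, ← add_smul]
    convert zero_smul ℝ p₁
    field_simp
    ring
  obtain ⟨a, b, ha, hb, rfl⟩ := exists_pos_smul_add_smul_of_sbtw
    (hpos hr₁ (left_mem_affineSpan_pair _ _ _)) (hpos hr₂ h.wbtw.mem_affineSpan)
    (hpos hr₃ (right_mem_affineSpan_pair _ _ _)) h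
  obtain ⟨t, ht, heq⟩ := exists_mem_Ioo_slerp_eq (hKs _ hp₁) (hKs _ hp₃) (hK _ hp₁ _ hp₃)
    ((inner_lt_one_iff_real_of_norm_eq_one (hKs _ hp₁) (hKs _ hp₃)).2 hp₁₃) ha hb (hKs _ hp₂)
  exact hKconv _ hp₁ _ hp₃ hp₁₃ t ht (heq ▸ hp₂)

end Slerp

/-- Let `K ⊆ S²` satisfy `⟨p,q⟩ > cos(π/100)` for all `p, q ∈ K` and be
strictly geodesically convex (the interior of the minimising great-circle arc between any
two distinct points of `K` avoids `K`). Let `C = {r p : r ∈ [0,1], p ∈ K}` be the cone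
over `K` with apex the origin, and let `L` be a line with `0 ∉ L`. Then `L ∩ C` contains
at most two points. -/
theorem stmt14 (K : Set (EuclideanSpace ℝ (Fin 3)))
    (hKs : ∀ p ∈ K, ‖p‖ = 1)
    (hKclose : ∀ p ∈ K, ∀ q ∈ K, Real.cos (Real.pi / 100) < (inner ℝ p q : ℝ))
    (hKconv : ∀ p ∈ K, ∀ q ∈ K, p ≠ q →
      ∀ t ∈ Ioo (0:ℝ) 1,
        (Real.sin (Real.arccos (inner ℝ p q : ℝ)))⁻¹ •
            (Real.sin ((1 - t) * Real.arccos (inner ℝ p q : ℝ)) • p +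
              Real.sin (t * Real.arccos (inner ℝ p q : ℝ)) • q) ∉ K)
    (L : Set (EuclideanSpace ℝ (Fin 3)))
    (hL : ∃ x v : EuclideanSpace ℝ (Fin 3), v ≠ 0 ∧ L = {y | ∃ t : ℝ, y = x + t • v})
    (h0 : (0 : EuclideanSpace ℝ (Fin 3)) ∉ L) :
    ∃ a b : EuclideanSpace ℝ (Fin 3),
      L ∩ {w | ∃ r ∈ Icc (0:ℝ) 1, ∃ p ∈ K, w = r • p} ⊆ {a, b} := by
  obtain ⟨x, v, -, rfl⟩ := hL
  have hK : ∀ p ∈ K, ∀ q ∈ K, -1 < ⟪p, q⟫ := fun p hp q hq =>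
    (neg_one_le_cos _).trans_lt (hKclose p hp q hq)
  refine ((collinear_setOf_eq_add_smul x v).subset
    inter_subset_left).exists_subset_pair_of_forall_not_sbtw ?_
  rintro _ ⟨hu₁, r₁, hr₁, p₁, hp₁, rfl⟩ _ ⟨-, r₂, hr₂, p₂, hp₂, rfl⟩ _ ⟨hu₃, r₃, hr₃, p₃, hp₃, rfl⟩
  exact not_sbtw_smul_of_forall_slerp_notMem hKs hK hKconv hp₁ hp₂ hp₃ hr₁.1 hr₂.1 hr₃.1
    fun hmem => h0 (affineSpan_pair_subset_setOf_eq_add_smul hu₁ hu₃ hmem)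
end
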